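/- arXiv:2208.07323 — 4 statements merged into one kernel-verified Lean document; each statement's English description precedes it below -/
import Mathlib

section
/- Suppose all diagonal entries of D̄ are strictly positive (every node has nonzero signed degree). Then the normalized signed magnetic Laplacian L̄^q_n = D̄^{-1/2} L̄^q D̄^{-1/2} is Hermitian positive semidefinite. -/
/-!
Conjugating by the real diagonal matrix `D̄^{-1/2}` preserves positive semidefiniteness, so it
suffices to treat `L̄^q`. Its off-diagonal entries have modulus `|A_s(i,j)|` and, since `Θ` vanishes
on the diagonal, its diagonal entries are `D̄(i,i) - A_s(i,i) ≥ ∑_{j ≠ i} |A_s(i,j)|`. A Hermitian,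
weakly diagonally dominant matrix is positive semidefinite by Gershgorin's circle theorem.
-/

open Matrix Complex ComplexOrder

namespace Matrix

variable {𝕜 n : Type*} [RCLike 𝕜] [Fintype n] [DecidableEq n]

theorem IsHermitian.posSemidef_of_sum_norm_offDiag_le_re {A : Matrix n n 𝕜} (hA : A.IsHermitian)
    (hdom : ∀ i, ∑ j ∈ Finset.univ.erase i, ‖A i j‖ ≤ RCLike.re (A i i)) : A.PosSemidef := by
  refine hA.posSemidef_iff_eigenvalues_nonneg.mpr fun i => ?_
  have hμ : Module.End.HasEigenvalue A.toLin' (hA.eigenvalues i : 𝕜) := by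
    rw [Module.End.hasEigenvalue_iff_mem_spectrum, spectrum_toLin']
    exact spectrum.algebraMap_mem 𝕜 (hA.eigenvalues_mem_spectrum_real i)
  obtain ⟨k, hk⟩ := eigenvalue_mem_ball hμ
  rw [Metric.mem_closedBall, dist_comm, dist_eq_norm] at hk
  have hre : RCLike.re (A k k) - hA.eigenvalues i ≤ ‖A k k - (hA.eigenvalues i : 𝕜)‖ := by
    simpa using RCLike.re_le_norm (A k k - (hA.eigenvalues i : 𝕜))
  rw [Pi.zero_apply]
  linarith [hdom k]

end Matrix

section MagneticLaplacian

variable {n : Type*}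

/-- `A_s ⊙ exp(ιΘ)`. -/
noncomputable def magneticAdjacency (As Θ : Matrix n n ℝ) : Matrix n n ℂ :=
  Matrix.of fun i j => ((As i j : ℝ) : ℂ) * Complex.exp (Complex.I * (Θ i j : ℝ))

variable {As Θ : Matrix n n ℝ}

theorem norm_magneticAdjacency_apply (i j : n) : ‖magneticAdjacency As Θ i j‖ = |As i j| := by
  simp [magneticAdjacency, Complex.norm_exp_ofReal_mul_I, mul_comm Complex.I]

theorem magneticAdjacency_apply_self (hΘ : ∀ i j, Θ i j = -Θ j i) (i : n) :
    magneticAdjacency As Θ i i = As i i := by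
  have hΘi : Θ i i = 0 := by linarith [hΘ i i]
  simp [magneticAdjacency, hΘi]

theorem isHermitian_magneticAdjacency (hAs : ∀ i j, As i j = As j i)
    (hΘ : ∀ i j, Θ i j = -Θ j i) : (magneticAdjacency As Θ).IsHermitian := by
  ext i j
  simp only [conjTranspose_apply, magneticAdjacency, of_apply, star_mul', Complex.star_def,
    Complex.conj_ofReal, ← Complex.exp_conj, map_mul, Complex.conj_I, hAs j i, hΘ j i]
  push_cast
  ring_nf

variable [Fintype n] [DecidableEq n]

noncomputable def signedMagneticLaplacian (As Θ : Matrix n n ℝ) : Matrix n n ℂ :=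
  Matrix.diagonal (fun i => ((∑ j, |As i j| : ℝ) : ℂ)) - magneticAdjacency As Θ

theorem posSemidef_signedMagneticLaplacian (hAs : ∀ i j, As i j = As j i)
    (hΘ : ∀ i j, Θ i j = -Θ j i) : (signedMagneticLaplacian As Θ).PosSemidef := by
  have hherm : (signedMagneticLaplacian As Θ).IsHermitian :=
    (isHermitian_diagonal_of_self_adjoint _ (funext fun i => Complex.conj_ofReal _)).sub
      (isHermitian_magneticAdjacency hAs hΘ)
  refine hherm.posSemidef_of_sum_norm_offDiag_le_re fun i => ?_
  have hoff : ∀ j ∈ Finset.univ.erase i, ‖signedMagneticLaplacian As Θ i j‖ = |As i j| :=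
    fun j hj => by
      simp [signedMagneticLaplacian, diagonal_apply_ne _ (Finset.ne_of_mem_erase hj).symm,
        norm_magneticAdjacency_apply]
  have hdiag : RCLike.re (signedMagneticLaplacian As Θ i i) = ∑ j, |As i j| - As i i := by
    simp [signedMagneticLaplacian, magneticAdjacency_apply_self hΘ]
  rw [Finset.sum_congr rfl hoff, hdiag, ← Finset.add_sum_erase _ _ (Finset.mem_univ i)]
  linarith [le_abs_self (As i i)]

end MagneticLaplacian

theorem normalized_signed_magnetic_laplacian_posSemidef_general {N : ℕ}
    (As : Matrix (Fin N) (Fin N) ℝ) (hAs : ∀ i j, As i j = As j i)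
    (Θ : Matrix (Fin N) (Fin N) ℝ) (hΘ : ∀ i j, Θ i j = -Θ j i)
    (L : Matrix (Fin N) (Fin N) ℂ)
    (hL : L = Matrix.diagonal (fun i => ((∑ j, |As i j| : ℝ) : ℂ)) -
      Matrix.of (fun i j => ((As i j : ℝ) : ℂ) * Complex.exp (Complex.I * (Θ i j : ℝ))))
    (Dh : Matrix (Fin N) (Fin N) ℂ)
    (hDh : Dh = Matrix.diagonal (fun i => (((Real.sqrt (∑ j, |As i j|))⁻¹ : ℝ) : ℂ))) :
    (Dh * L * Dh).PosSemidef := by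
  have hL' : L = signedMagneticLaplacian As Θ := hL
  have hDh_herm : Dh.IsHermitian := hDh ▸
    isHermitian_diagonal_of_self_adjoint _ (funext fun i => Complex.conj_ofReal _)
  simpa only [hL', hDh_herm.eq] using
    (posSemidef_signedMagneticLaplacian hAs hΘ).mul_mul_conjTranspose_same Dh

/-- If all signed degrees are strictly positive, the normalized signed magnetic Laplacian
`L̄^q_n = D̄^{-1/2} L̄^q D̄^{-1/2}` is Hermitian positive semidefinite. -/
theorem normalized_signed_magnetic_laplacian_posSemidef {N : ℕ}
    (As : Matrix (Fin N) (Fin N) ℝ) (hAs : ∀ i j, As i j = As j i)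
    (Θ : Matrix (Fin N) (Fin N) ℝ) (hΘ : ∀ i j, Θ i j = -Θ j i)
    (hd : ∀ i, 0 < ∑ j, |As i j|)
    (L : Matrix (Fin N) (Fin N) ℂ)
    (hL : L = Matrix.diagonal (fun i => ((∑ j, |As i j| : ℝ) : ℂ)) -
      Matrix.of (fun i j => ((As i j : ℝ) : ℂ) * Complex.exp (Complex.I * (Θ i j : ℝ))))
    (Dh : Matrix (Fin N) (Fin N) ℂ)
    (hDh : Dh = Matrix.diagonal (fun i => (((Real.sqrt (∑ j, |As i j|))⁻¹ : ℝ) : ℂ))) :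
    (Dh * L * Dh).PosSemidef :=
  normalized_signed_magnetic_laplacian_posSemidef_general As hAs Θ hΘ L hL Dh hDh
end

section
/- Let A be a real symmetric N×N matrix with zero diagonal, D̄ the diagonal matrix with D̄(i,i) = Σ_j |A(i,j)|, Ã = A + I, and D̃ = D̄ + I. Then the renormalized aggregation matrix P = D̃^{-1/2} Ã D̃^{-1/2} is symmetric and all its eigenvalues lie in the interval [-1, 1]. -/
/-!
`P` is conjugate, by the diagonal matrix `D̃^{-1/2}`, to the random-walk matrix `D̃⁻¹ Ã`, whose
absolute row sums are at most `1` because `|A i i + 1| ≤ |A i i| + 1`. Gershgorin's circle theorem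
then confines every eigenvalue to `[-1, 1]`.
-/

open Matrix Module.End

namespace Matrix

variable {n : Type*} [Fintype n] [DecidableEq n]

theorem IsSymm.diagonal_mul_mul_diagonal {B : Matrix n n ℝ} (hB : B.IsSymm) (d : n → ℝ) :
    (diagonal d * B * diagonal d).IsSymm := by
  simp [IsSymm, transpose_mul, hB.eq, Matrix.mul_assoc]

theorem abs_le_of_mulVec_eq_smul_of_sum_abs_le {B : Matrix n n ℝ} {r μ : ℝ}
    (hB : ∀ i, ∑ j, |B i j| ≤ r) {u : n → ℝ} (hu : u ≠ 0) (h : B *ᵥ u = μ • u) : |μ| ≤ r := by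
  have hμ : HasEigenvalue (toLin' B) μ :=
    hasEigenvalue_of_hasEigenvector ⟨mem_eigenspace_iff.mpr (by rwa [toLin'_apply]), hu⟩
  obtain ⟨k, hk⟩ := eigenvalue_mem_ball hμ
  rw [Metric.mem_closedBall, Real.dist_eq] at hk
  simp only [Real.norm_eq_abs] at hk
  calc |μ| ≤ |B k k| + |μ - B k k| := by
        simpa using abs_add_le (B k k) (μ - B k k)
    _ ≤ |B k k| + ∑ j ∈ Finset.univ.erase k, |B k j| := by gcongr
    _ = ∑ j, |B k j| := Finset.add_sum_erase _ (fun j => |B k j|) (Finset.mem_univ k)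
    _ ≤ r := hB k

theorem diagonal_mul_mul_diagonal_mulVec_eq_smul {f : n → ℝ} {B : Matrix n n ℝ} {μ : ℝ}
    {v : n → ℝ} (h : (diagonal f * B * diagonal f) *ᵥ v = μ • v) :
    (diagonal f * diagonal f * B) *ᵥ (diagonal f *ᵥ v) = μ • (diagonal f *ᵥ v) := by
  rw [mulVec_mulVec, show diagonal f * diagonal f * B * diagonal f =
      diagonal f * (diagonal f * B * diagonal f) by simp only [Matrix.mul_assoc],
    ← mulVec_mulVec, h, mulVec_smul]

theorem abs_le_of_diagonal_mul_mul_diagonal_mulVec_eq_smul {f : n → ℝ} (hf : ∀ i, f i ≠ 0)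
    {B : Matrix n n ℝ} {r μ : ℝ} (hB : ∀ i, f i ^ 2 * ∑ j, |B i j| ≤ r) {v : n → ℝ}
    (hv : v ≠ 0) (h : (diagonal f * B * diagonal f) *ᵥ v = μ • v) : |μ| ≤ r := by
  refine abs_le_of_mulVec_eq_smul_of_sum_abs_le (fun i => ?_) ?_
    (diagonal_mul_mul_diagonal_mulVec_eq_smul h)
  · simpa [diagonal_mul_diagonal, diagonal_mul, abs_mul, abs_mul_self, Finset.mul_sum, sq]
      using hB i
  · contrapose! hv
    funext i
    simpa [mulVec_diagonal, hf i] using congrFun hv i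

theorem sum_abs_add_one_apply_le (A : Matrix n n ℝ) (i : n) :
    ∑ j, |(A + 1) i j| ≤ ∑ j, |A i j| + 1 := by
  calc ∑ j, |(A + 1) i j| ≤ ∑ j, (|A i j| + |(1 : Matrix n n ℝ) i j|) :=
        Finset.sum_le_sum fun j _ => abs_add_le _ _
    _ = ∑ j, |A i j| + 1 := by
        rw [Finset.sum_add_distrib]
        simp [one_apply, apply_ite]

end Matrix

theorem renormalized_aggregation_eigenvalues_general {N : ℕ}
    (A : Matrix (Fin N) (Fin N) ℝ) (hA : ∀ i j, A i j = A j i)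
    (Dh : Matrix (Fin N) (Fin N) ℝ)
    (hDh : Dh = Matrix.diagonal (fun i => (Real.sqrt ((∑ j, |A i j|) + 1))⁻¹))
    (P : Matrix (Fin N) (Fin N) ℝ)
    (hP : P = Dh * (A + 1) * Dh) :
    P.IsSymm ∧
      ∀ (μ : ℝ) (v : Fin N → ℝ), v ≠ 0 → P *ᵥ v = μ • v → -1 ≤ μ ∧ μ ≤ 1 := by
  subst hDh hP
  have hdeg : ∀ i, 0 < (∑ j, |A i j|) + 1 := fun i => by positivity
  have hrow : ∀ i, (Real.sqrt ((∑ j, |A i j|) + 1))⁻¹ ^ 2 * ∑ j, |(A + 1) i j| ≤ 1 := by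
    intro i
    rw [inv_pow, Real.sq_sqrt (hdeg i).le, inv_mul_le_one₀ (hdeg i)]
    exact sum_abs_add_one_apply_le A i
  refine ⟨((IsSymm.ext fun i j => hA j i).add isSymm_one).diagonal_mul_mul_diagonal _,
    fun μ v hv h => abs_le.mp ?_⟩
  exact abs_le_of_diagonal_mul_mul_diagonal_mulVec_eq_smul
    (fun i => inv_ne_zero (Real.sqrt_pos.mpr (hdeg i)).ne') hrow hv h

/-- The renormalized aggregation matrix `P = D̃^{-1/2} Ã D̃^{-1/2}` with `Ã = A + I`,
`D̃ = D̄ + I`, is symmetric and all its eigenvalues lie in `[-1, 1]`. -/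
theorem renormalized_aggregation_eigenvalues {N : ℕ}
    (A : Matrix (Fin N) (Fin N) ℝ) (hA : ∀ i j, A i j = A j i)
    (hdiag : ∀ i, A i i = 0)
    (Dh : Matrix (Fin N) (Fin N) ℝ)
    (hDh : Dh = Matrix.diagonal (fun i => (Real.sqrt ((∑ j, |A i j|) + 1))⁻¹))
    (P : Matrix (Fin N) (Fin N) ℝ)
    (hP : P = Dh * (A + 1) * Dh) :
    P.IsSymm ∧
      ∀ (μ : ℝ) (v : Fin N → ℝ), v ≠ 0 → P *ᵥ v = μ • v → -1 ≤ μ ∧ μ ≤ 1 :=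
  renormalized_aggregation_eigenvalues_general A hA Dh hDh P hP
end

section
/- For a signed graph that is not balanced (no diagonal ±1 matrix S makes S A S entrywise nonnegative) and whose underlying unsigned graph |A| is connected, the smallest eigenvalue of the signed Laplacian L̄ = D̄ - A is strictly positive. -/
open Matrix

/-!
Symmetrising, `2 xᵀ L̄ x = ∑ᵢ ∑ⱼ (|Aᵢⱼ| (xᵢ² + xⱼ²) - 2 Aᵢⱼ xᵢ xⱼ)`, and every summand is
nonnegative since `2 Aᵢⱼ xᵢ xⱼ ≤ |Aᵢⱼ| · 2|xᵢ||xⱼ|`. If `xᵀ L̄ x ≤ 0` then all summands vanish, so along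
each edge `|xᵢ| = |xⱼ|` and `Aᵢⱼ xᵢ xⱼ ≥ 0`. By connectivity `|x|` is a constant `|x_k|`, so for
`x ≠ 0` the signs `xᵢ / x_k` form a switching that makes every entry of `S A S` nonnegative, i.e. the
signed graph is balanced.
-/

theorem two_mul_mul_le_abs_mul_sq_add_sq (a x y : ℝ) :
    2 * a * (x * y) ≤ |a| * (x ^ 2 + y ^ 2) := by
  have hxy : 2 * |x * y| ≤ x ^ 2 + y ^ 2 := by
    rw [abs_mul, ← sq_abs x, ← sq_abs y]
    nlinarith [sq_nonneg (|x| - |y|)]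
  calc 2 * a * (x * y) ≤ |2 * a * (x * y)| := le_abs_self _
    _ = |a| * (2 * |x * y|) := by rw [abs_mul, abs_mul, abs_two]; ring
    _ ≤ |a| * (x ^ 2 + y ^ 2) := by gcongr

theorem abs_eq_abs_of_two_mul_mul_eq_abs_mul_sq_add_sq {a x y : ℝ} (ha : a ≠ 0)
    (h : 2 * a * (x * y) = |a| * (x ^ 2 + y ^ 2)) : |x| = |y| := by
  have hle : |a| * (|x| - |y|) ^ 2 ≤ 0 := by
    have := le_abs_self (2 * a * (x * y))
    rw [abs_mul, abs_mul, abs_mul, abs_two, h, ← sq_abs x, ← sq_abs y] at this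
    nlinarith
  have hsq : (|x| - |y|) ^ 2 = 0 :=
    le_antisymm (nonpos_of_mul_nonpos_right hle (abs_pos.mpr ha)) (sq_nonneg _)
  linarith [pow_eq_zero_iff (n := 2) two_ne_zero |>.mp hsq]

theorem SimpleGraph.Preconnected.eq_of_forall_adj {V β : Type*} {G : SimpleGraph V}
    (hG : G.Preconnected) {f : V → β} (hf : ∀ i j, G.Adj i j → f i = f j) (i j : V) :
    f i = f j := by
  obtain ⟨w⟩ := hG i j
  induction w with
  | nil => rfl
  | cons hadj _ ih => exact (hf _ _ hadj).trans ih

namespace Matrix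

variable {n : Type*} [Fintype n] [DecidableEq n]

def signedLaplacian (A : Matrix n n ℝ) : Matrix n n ℝ :=
  diagonal (fun i => ∑ j, |A i j|) - A

/-- `S` is the diagonal of the switching matrix in `S A S`. -/
def IsSignBalanced (A : Matrix n n ℝ) : Prop :=
  ∃ S : n → ℝ, (∀ i, S i = 1 ∨ S i = -1) ∧ ∀ i j, 0 ≤ S i * A i j * S j

variable {A : Matrix n n ℝ}

theorem signedLaplacian_isHermitian (hA : ∀ i j, A i j = A j i) :
    A.signedLaplacian.IsHermitian := by
  ext i j
  rcases eq_or_ne i j with rfl | hij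
  · simp [signedLaplacian]
  · simp [signedLaplacian, diagonal_apply_ne _ hij, diagonal_apply_ne _ hij.symm, hA j i]

theorem dotProduct_signedLaplacian_mulVec (A : Matrix n n ℝ) (x : n → ℝ) :
    x ⬝ᵥ A.signedLaplacian *ᵥ x = ∑ i, ∑ j, (|A i j| * x i ^ 2 - A i j * (x i * x j)) := by
  rw [signedLaplacian, sub_mulVec, dotProduct_sub, dotProduct, dotProduct,
    ← Finset.sum_sub_distrib]
  refine Finset.sum_congr rfl fun i _ => ?_
  rw [mulVec_diagonal, mulVec, dotProduct, Finset.sum_mul, Finset.mul_sum, Finset.mul_sum,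
    ← Finset.sum_sub_distrib]
  exact Finset.sum_congr rfl fun j _ => by ring

theorem two_mul_dotProduct_signedLaplacian_mulVec (hA : ∀ i j, A i j = A j i) (x : n → ℝ) :
    2 * (x ⬝ᵥ A.signedLaplacian *ᵥ x) =
      ∑ i, ∑ j, (|A i j| * (x i ^ 2 + x j ^ 2) - 2 * A i j * (x i * x j)) := by
  have htranspose : x ⬝ᵥ A.signedLaplacian *ᵥ x =
      ∑ i, ∑ j, (|A i j| * x j ^ 2 - A i j * (x i * x j)) := by
    rw [dotProduct_signedLaplacian_mulVec, Finset.sum_comm]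
    exact Finset.sum_congr rfl fun i _ => Finset.sum_congr rfl fun j _ => by rw [hA]; ring
  rw [two_mul]
  nth_rw 2 [htranspose]
  rw [dotProduct_signedLaplacian_mulVec, ← Finset.sum_add_distrib]
  exact Finset.sum_congr rfl fun i _ => by
    rw [← Finset.sum_add_distrib]; exact Finset.sum_congr rfl fun j _ => by ring

theorem two_mul_mul_eq_of_dotProduct_signedLaplacian_mulVec_nonpos
    (hA : ∀ i j, A i j = A j i) {x : n → ℝ} (hQ : x ⬝ᵥ A.signedLaplacian *ᵥ x ≤ 0) (i j : n) :
    2 * A i j * (x i * x j) = |A i j| * (x i ^ 2 + x j ^ 2) := by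
  have hterm : ∀ i j, 0 ≤ |A i j| * (x i ^ 2 + x j ^ 2) - 2 * A i j * (x i * x j) :=
    fun i j => sub_nonneg.mpr (two_mul_mul_le_abs_mul_sq_add_sq _ _ _)
  have hsum : ∑ i, ∑ j, (|A i j| * (x i ^ 2 + x j ^ 2) - 2 * A i j * (x i * x j)) = 0 :=
    le_antisymm (by rw [← two_mul_dotProduct_signedLaplacian_mulVec hA]; linarith)
      (Finset.sum_nonneg fun i _ => Finset.sum_nonneg fun j _ => hterm i j)
  rw [Finset.sum_eq_zero_iff_of_nonneg fun i _ => Finset.sum_nonneg fun j _ => hterm i j] at hsum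
  have hij := (Finset.sum_eq_zero_iff_of_nonneg fun j _ => hterm i j).mp
    (hsum i (Finset.mem_univ i)) j (Finset.mem_univ j)
  linarith

theorem isSignBalanced_of_dotProduct_signedLaplacian_mulVec_nonpos (hA : ∀ i j, A i j = A j i)
    (hconn : (SimpleGraph.fromRel fun i j => A i j ≠ 0).Connected) {x : n → ℝ} (hx : x ≠ 0)
    (hQ : x ⬝ᵥ A.signedLaplacian *ᵥ x ≤ 0) : A.IsSignBalanced := by
  have hedge := two_mul_mul_eq_of_dotProduct_signedLaplacian_mulVec_nonpos hA hQ
  have hadj : ∀ i j, (SimpleGraph.fromRel fun i j => A i j ≠ 0).Adj i j → |x i| = |x j| := by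
    rintro i j ⟨-, hij | hji⟩
    · exact abs_eq_abs_of_two_mul_mul_eq_abs_mul_sq_add_sq hij (hedge i j)
    · exact (abs_eq_abs_of_two_mul_mul_eq_abs_mul_sq_add_sq hji (hedge j i)).symm
  obtain ⟨k, hk⟩ : ∃ k, x k ≠ 0 := Function.ne_iff.mp hx
  refine ⟨fun i => x i / x k, fun i => ?_, fun i j => ?_⟩
  · refine (abs_eq zero_le_one).mp ?_
    rw [abs_div, hconn.preconnected.eq_of_forall_adj hadj i k, div_self (abs_ne_zero.mpr hk)]
  · have hsign : 0 ≤ A i j * (x i * x j) := by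
      nlinarith [hedge i j, abs_nonneg (A i j), sq_nonneg (x i), sq_nonneg (x j)]
    calc 0 ≤ A i j * (x i * x j) / x k ^ 2 := div_nonneg hsign (sq_nonneg _)
      _ = x i / x k * A i j * (x j / x k) := by ring

end Matrix

theorem unbalanced_connected_signed_laplacian_posDef_general {N : ℕ}
    (A : Matrix (Fin N) (Fin N) ℝ) (hA : ∀ i j, A i j = A j i)
    (hconn : (SimpleGraph.fromRel (fun i j : Fin N => A i j ≠ 0)).Connected)
    (hunbal : ¬ ∃ S : Fin N → ℝ, (∀ i, S i = 1 ∨ S i = -1) ∧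
      ∀ i j, 0 ≤ S i * A i j * S j)
    (L : Matrix (Fin N) (Fin N) ℝ)
    (hL : L = Matrix.diagonal (fun i => ∑ j, |A i j|) - A) :
    L.PosDef := by
  rw [hL, ← signedLaplacian]
  refine PosDef.of_dotProduct_mulVec_pos (signedLaplacian_isHermitian hA) fun x hx => ?_
  rw [star_trivial]
  by_contra! hQ
  exact hunbal (isSignBalanced_of_dotProduct_signedLaplacian_mulVec_nonpos hA hconn hx hQ)

/-- For an unbalanced signed graph whose underlying unsigned graph is connected, the
signed Laplacian `L̄ = D̄ - A` is positive definite (its smallest eigenvalue is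
strictly positive). -/
theorem unbalanced_connected_signed_laplacian_posDef {N : ℕ}
    (A : Matrix (Fin N) (Fin N) ℝ) (hA : ∀ i j, A i j = A j i)
    (hdiag : ∀ i, A i i = 0)
    (hconn : (SimpleGraph.fromRel (fun i j : Fin N => A i j ≠ 0)).Connected)
    (hunbal : ¬ ∃ S : Fin N → ℝ, (∀ i, S i = 1 ∨ S i = -1) ∧
      ∀ i j, 0 ≤ S i * A i j * S j)
    (L : Matrix (Fin N) (Fin N) ℝ)
    (hL : L = Matrix.diagonal (fun i => ∑ j, |A i j|) - A) :
    L.PosDef :=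
  unbalanced_connected_signed_laplacian_posDef_general A hA hconn hunbal L hL
end

section
/- Let A_s be real symmetric, Θ real antisymmetric, and write the real part of the quadratic form of L̄^q = D̄ - A_s ⊙ exp(ιΘ) as Re(x† L̄^q x). Then Re(x† L̄^q x) ≥ (1/2) Σ_{m,n} |A_s(m,n)| (|x(m)| - |x(n)|)² for every x ∈ ℂ^N. -/
/-!
The degree part of the quadratic form contributes `∑ₘ (∑ₙ |A(m,n)|) |x m|²`, while each
off-diagonal term is bounded by its modulus `|A(m,n)| |x m| |x n|`, the phase factor having
modulus one. By symmetry of `A`, the difference of these two sums is exactly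
`½ ∑ₘₙ |A(m,n)| (|x m| - |x n|)²`.
-/

open Matrix Complex

section QuadraticForm

variable {ι 𝕜 : Type*} [Fintype ι] [RCLike 𝕜]

theorem re_star_dotProduct_diagonal_mulVec [DecidableEq ι] (d : ι → ℝ) (x : ι → 𝕜) :
    RCLike.re (star x ⬝ᵥ diagonal (fun i => (d i : 𝕜)) *ᵥ x) = ∑ i, d i * ‖x i‖ ^ 2 := by
  simp only [dotProduct, mulVec_diagonal, map_sum, Pi.star_apply]
  refine Finset.sum_congr rfl fun i _ => ?_
  rw [mul_left_comm, RCLike.star_def, RCLike.conj_mul, ← RCLike.ofReal_pow, ← RCLike.ofReal_mul,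
    RCLike.ofReal_re]

theorem re_star_dotProduct_mulVec_le (B : Matrix ι ι 𝕜) (x : ι → 𝕜) :
    RCLike.re (star x ⬝ᵥ B *ᵥ x) ≤ ∑ i, ∑ j, ‖B i j‖ * (‖x i‖ * ‖x j‖) := by
  simp only [dotProduct, mulVec, Finset.mul_sum, map_sum, Pi.star_apply]
  gcongr with i _ j _
  calc RCLike.re (star (x i) * (B i j * x j)) ≤ ‖star (x i) * (B i j * x j)‖ :=
        RCLike.re_le_norm _
    _ = ‖B i j‖ * (‖x i‖ * ‖x j‖) := by rw [norm_mul, norm_mul, norm_star]; ring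

end QuadraticForm

theorem sum_sum_mul_sub_sq_eq {ι : Type*} [Fintype ι] (w : ι → ι → ℝ)
    (hw : ∀ i j, w i j = w j i) (a : ι → ℝ) :
    (1 / 2) * ∑ i, ∑ j, w i j * (a i - a j) ^ 2 =
      ∑ i, (∑ j, w i j) * a i ^ 2 - ∑ i, ∑ j, w i j * (a i * a j) := by
  have hswap : ∑ i, ∑ j, w i j * a j ^ 2 = ∑ i, ∑ j, w i j * a i ^ 2 := by
    rw [Finset.sum_comm]; simp_rw [hw]
  have hexpand : ∀ i j, w i j * (a i - a j) ^ 2 =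
      w i j * a i ^ 2 + w i j * a j ^ 2 - 2 * (w i j * (a i * a j)) := fun i j => by ring
  simp only [hexpand, Finset.sum_sub_distrib, Finset.sum_add_distrib, ← Finset.mul_sum, hswap,
    Finset.sum_mul]
  ring

theorem norm_ofReal_mul_exp_I_mul (a θ : ℝ) : ‖(a : ℂ) * exp (I * θ)‖ = |a| := by
  rw [norm_mul, mul_comm I, norm_exp_ofReal_mul_I, mul_one, norm_real, Real.norm_eq_abs]

theorem signed_magnetic_laplacian_key_inequality_general {N : ℕ}
    (As : Matrix (Fin N) (Fin N) ℝ) (hAs : ∀ i j, As i j = As j i)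
    (Θ : Matrix (Fin N) (Fin N) ℝ)
    (L : Matrix (Fin N) (Fin N) ℂ)
    (hL : L = Matrix.diagonal (fun i => ((∑ j, |As i j| : ℝ) : ℂ)) -
      Matrix.of (fun i j => ((As i j : ℝ) : ℂ) * Complex.exp (Complex.I * (Θ i j : ℝ)))) :
    ∀ x : Fin N → ℂ,
      (1 / 2) * ∑ m, ∑ n, |As m n| * (‖x m‖ - ‖x n‖) ^ 2 ≤
        (star x ⬝ᵥ L *ᵥ x).re := by
  intro x
  have hdegree := re_star_dotProduct_diagonal_mulVec (fun i => ∑ j, |As i j|) x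
  have hmagnetic := re_star_dotProduct_mulVec_le
    (of fun i j => (As i j : ℂ) * exp (I * (Θ i j : ℝ))) x
  simp only [of_apply, norm_ofReal_mul_exp_I_mul] at hmagnetic
  rw [sum_sum_mul_sub_sq_eq _ (fun i j => by rw [hAs]), hL, sub_mulVec, dotProduct_sub, sub_re]
  exact sub_le_sub hdegree.symm.le hmagnetic

/-- Key inequality for positive semidefiniteness of the signed magnetic Laplacian:
`Re(x† L̄^q x) ≥ (1/2) Σ_{m,n} |A_s(m,n)| (|x(m)| - |x(n)|)²`. -/
theorem signed_magnetic_laplacian_key_inequality {N : ℕ}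
    (As : Matrix (Fin N) (Fin N) ℝ) (hAs : ∀ i j, As i j = As j i)
    (Θ : Matrix (Fin N) (Fin N) ℝ) (hΘ : ∀ i j, Θ i j = -Θ j i)
    (L : Matrix (Fin N) (Fin N) ℂ)
    (hL : L = Matrix.diagonal (fun i => ((∑ j, |As i j| : ℝ) : ℂ)) -
      Matrix.of (fun i j => ((As i j : ℝ) : ℂ) * Complex.exp (Complex.I * (Θ i j : ℝ)))) :
    ∀ x : Fin N → ℂ,
      (1 / 2) * ∑ m, ∑ n, |As m n| * (‖x m‖ - ‖x n‖) ^ 2 ≤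
        (star x ⬝ᵥ L *ᵥ x).re :=
  signed_magnetic_laplacian_key_inequality_general As hAs Θ L hL
end
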